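/- Let V be a vector space over a field of characteristic 0. For all p,q ≥ 1 there exists a linear map ψ_{p,q}: V^{⊗p} ⊗ V^{⊗q} → V^{⊗(p+q)} such that w_{p+q} ∘ ψ_{p,q} = B ∘ (w_p ⊗ w_q), where w_k: V^{⊗k} → V^{⊗k} is the left-normed bracketing map and B: V^{⊗p}⊗V^{⊗q} → V^{⊗(p+q)} sends a⊗b to a⊗b − (−1)^{pq} b⊗a. -/

import Mathlib

/-- Auxiliary function computing a left-normed graded commutator: `glnbAux a p l`
brackets the (degree `p`) element `a` successively with the degree-one elements of
`l`, using the graded bracket `[x,b] = x*b − (−1)^{|x|} b*x`. -/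
def glnbAux {A : Type*} [Ring A] : A → ℕ → List A → A
  | a, _, [] => a
  | a, p, b :: l => glnbAux (a * b - ((-1 : ℤ) ^ p) • (b * a)) (p + 1) l

/-- The left-normed graded commutator `[...[v₁,v₂],...,vₙ]` of `n ≥ 1` elements of
`V ⊆ T(V)`, each placed in degree one. -/
noncomputable def glnbF (k : Type*) (V : Type*) [CommRing k] [AddCommGroup V]
    [Module k V] {n : ℕ} (v : Fin (n + 1) → V) : TensorAlgebra k V :=
  glnbAux (TensorAlgebra.ι k (v 0)) 1
    (List.ofFn fun i : Fin n => TensorAlgebra.ι k (v i.succ))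

section Aux
variable {k : Type*} [CommRing k] {A : Type*} [Ring A] [Algebra k A]

lemma glnbAux_concat (a : A) (d : ℕ) (l₁ l₂ : List A) :
    glnbAux a d (l₁ ++ l₂) = glnbAux (glnbAux a d l₁) (d + l₁.length) l₂ := by
  induction l₁ generalizing a d with
  | nil => simp [glnbAux]
  | cons b t ih =>
      simp only [List.cons_append, glnbAux, List.length_cons]
      rw [ih]
      have h : d + 1 + t.length = d + (t.length + 1) := by omega
      rw [h]

lemma glnbAux_add (x y : A) (d : ℕ) (l : List A) :
    glnbAux (x + y) d l = glnbAux x d l + glnbAux y d l := by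
  induction l generalizing x y d with
  | nil => rfl
  | cons b t ih =>
      simp only [glnbAux]
      rw [← ih]
      congr 1
      simp only [add_mul, mul_add, smul_add]
      abel

lemma glnbAux_smul (c : k) (x : A) (d : ℕ) (l : List A) :
    glnbAux (c • x) d l = c • glnbAux x d l := by
  induction l generalizing x d with
  | nil => rfl
  | cons b t ih =>
      simp only [glnbAux]
      rw [← ih]
      congr 1
      rw [smul_mul_assoc, mul_smul_comm, smul_comm ((-1:ℤ)^d) c, smul_sub]

lemma key_id (x b c : A) (α β γ : ℤ) (hβ : β = 1 ∨ β = -1) :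
    x*(b*c - β•(c*b)) - (γ*α)•((b*c - β•(c*b))*x)
      = ((x*b - γ•(b*x))*c - (α*β)•(c*(x*b - γ•(b*x))))
        - β • ((x*c - α•(c*x))*b - (γ*β)•(b*(x*c - α•(c*x)))) := by
  rcases hβ with h | h <;> subst h <;>
    simp only [mul_sub, sub_mul, mul_add, add_mul, smul_add, smul_mul_assoc,
      mul_smul_comm, smul_sub, smul_smul, mul_assoc, one_smul, mul_one, one_mul, neg_smul,
      smul_neg, mul_neg, neg_mul, neg_neg, sub_neg_eq_add, mul_comm α γ] <;> abel

end Aux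

section Main
variable {k V : Type*} [Field k] [AddCommGroup V] [Module k V]

/-- span of iterated brackets of `X` (placed at exponent `d`) with `s` degree-one elements -/
def Gs (X : TensorAlgebra k V) (d s : ℕ) : Submodule k (TensorAlgebra k V) :=
  Submodule.span k
    {y | ∃ l : List V, l.length = s ∧ y = glnbAux X d (l.map (TensorAlgebra.ι k))}

lemma self_mem_Gs (X : TensorAlgebra k V) (d : ℕ) : X ∈ Gs X d 0 :=
  Submodule.subset_span ⟨[], rfl, rfl⟩

lemma bra_single {X : TensorAlgebra k V} {d s : ℕ} {Y : TensorAlgebra k V}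
    (hY : Y ∈ Gs X d s) (c : V) :
    Y * TensorAlgebra.ι k c - ((-1:ℤ)^(d+s)) • (TensorAlgebra.ι k c * Y)
      ∈ Gs (k := k) X d (s+1) := by
  induction hY using Submodule.span_induction with
  | mem y hy =>
      obtain ⟨l, hl, rfl⟩ := hy
      refine Submodule.subset_span ⟨l ++ [c], by simp [hl], ?_⟩
      rw [List.map_append, glnbAux_concat]
      simp only [List.length_map, hl, List.map_cons, List.map_nil]
      rfl
  | zero => simp [Gs, Submodule.zero_mem]
  | add y z hy hz ihy ihz =>
      have : (y + z) * TensorAlgebra.ι k c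
          - ((-1:ℤ)^(d+s)) • (TensorAlgebra.ι k c * (y + z))
          = (y * TensorAlgebra.ι k c - ((-1:ℤ)^(d+s)) • (TensorAlgebra.ι k c * y))
            + (z * TensorAlgebra.ι k c - ((-1:ℤ)^(d+s)) • (TensorAlgebra.ι k c * z)) := by
        simp only [add_mul, mul_add, smul_add]; abel
      rw [this]; exact Submodule.add_mem _ ihy ihz
  | smul a y hy ihy =>
      have : (a • y) * TensorAlgebra.ι k c
          - ((-1:ℤ)^(d+s)) • (TensorAlgebra.ι k c * (a • y))
          = a • (y * TensorAlgebra.ι k c - ((-1:ℤ)^(d+s)) • (TensorAlgebra.ι k c * y)) := by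
        rw [smul_mul_assoc, mul_smul_comm, smul_comm ((-1:ℤ)^(d+s)) a, smul_sub]
      rw [this]; exact Submodule.smul_mem _ a ihy

lemma zsmul_mem_sub {N : Submodule k (TensorAlgebra k V)} (n : ℤ) {x : TensorAlgebra k V}
    (hx : x ∈ N) : n • x ∈ N := by
  simpa using N.toAddSubgroup.zsmul_mem hx n

lemma main_br (X : TensorAlgebra k V) (d : ℕ) (u₀ : V) (us : List V) :
    ∀ (s : ℕ) (Y : TensorAlgebra k V), Y ∈ Gs (k := k) X d s →
      Y * glnbAux (TensorAlgebra.ι k u₀) 1 (us.map (TensorAlgebra.ι k)) -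
        ((-1:ℤ)^((d+s)*(us.length+1))) •
          (glnbAux (TensorAlgebra.ι k u₀) 1 (us.map (TensorAlgebra.ι k)) * Y)
        ∈ Gs (k := k) X d (s + (us.length + 1)) := by
  induction us using List.reverseRecOn with
  | nil =>
      intro s Y hY
      simpa [glnbAux, mul_one] using bra_single hY u₀
  | append_singleton l c ih =>
      intro s Y hY
      set ι := TensorAlgebra.ι k (M := V) with hι
      set B' := glnbAux (ι u₀) 1 (l.map ι) with hB'
      have hD : glnbAux (ι u₀) 1 ((l++[c]).map ι)
          = B' * ι c - ((-1:ℤ)^(l.length+1)) • (ι c * B') := by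
        rw [List.map_append, glnbAux_concat]
        rw [show 1 + (l.map ι).length = l.length + 1 by simp [Nat.add_comm]]
        rfl
      have h1 := ih s Y hY
      have h2 := bra_single hY c
      have h3 := ih (s+1) _ h2
      have h4 := bra_single h1 c
      have hkey := key_id Y B' (ι c) ((-1:ℤ)^(d+s)) ((-1:ℤ)^(l.length+1))
        ((-1:ℤ)^((d+s)*(l.length+1)))
        (by rcases Nat.even_or_odd (l.length+1) with h|h
            · exact Or.inl h.neg_one_pow
            · exact Or.inr h.neg_one_pow)
      simp only [List.length_append, List.length_cons, List.length_nil, Nat.zero_add] at *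
      rw [hD]
      rw [show ((-1:ℤ)^((d+s)*(l.length+1+1)))
            = ((-1:ℤ)^((d+s)*(l.length+1))) * ((-1:ℤ)^(d+s)) by
          rw [← pow_add]; congr 1 <;> ring]
      rw [hkey]
      refine Submodule.sub_mem _ ?_ (zsmul_mem_sub _ ?_)
      · rw [show ((-1:ℤ)^(d+s)) * ((-1:ℤ)^(l.length+1))
              = ((-1:ℤ)^(d+(s+(l.length+1)))) by rw [← pow_add]; congr 1 <;> ring]
        rw [show s + (l.length+1+1) = s + (l.length+1) + 1 by ring]
        exact h4
      · rw [show ((-1:ℤ)^((d+s)*(l.length+1))) * ((-1:ℤ)^(l.length+1))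
              = ((-1:ℤ)^((d+(s+1))*(l.length+1))) by rw [← pow_add]; congr 1 <;> ring]
        rw [show s + (l.length+1+1) = s + 1 + (l.length+1) by ring]
        exact h3

/-- monomials of length `n+1` -/
def Mon (k : Type*) (V : Type*) [Field k] [AddCommGroup V] [Module k V] (n : ℕ) :
    Set (TensorAlgebra k V) :=
  {x | ∃ (u₀ : V) (us : List V), us.length = n ∧
    x = ((u₀ :: us).map (TensorAlgebra.ι k)).prod}

lemma pow_le_span_mon (n : ℕ) :
    (LinearMap.range (TensorAlgebra.ι k (M := V)))^(n+1) ≤ Submodule.span k (Mon k V n) := by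
  induction n with
  | zero =>
      rw [pow_one]
      rintro x ⟨v, rfl⟩
      exact Submodule.subset_span ⟨v, [], rfl, by simp⟩
  | succ n ih =>
      rw [pow_succ']
      refine Submodule.mul_le.2 ?_
      rintro m ⟨v, rfl⟩ x hx
      have hx' := ih hx
      clear hx
      induction hx' using Submodule.span_induction with
      | mem y hy =>
          obtain ⟨u₀, us, hlen, rfl⟩ := hy
          refine Submodule.subset_span ⟨v, u₀ :: us, by simp [hlen], ?_⟩
          simp [List.prod_cons]
      | zero => simp
      | add y z hy hz ihy ihz => rw [mul_add]; exact Submodule.add_mem _ ihy ihz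
      | smul a y hy ihy => rw [mul_smul_comm]; exact Submodule.smul_mem _ a ihy

end Main


set_option synthInstance.maxHeartbeats 1000000 in
set_option maxHeartbeats 2000000 in
/-- For all `p, q ≥ 1` there is a (bi)linear map `ψ_{p,q}` on
`V^{⊗p} ⊗ V^{⊗q}` with `w_{p+q} ∘ ψ_{p,q} = B ∘ (w_p ⊗ w_q)`, where `w_k` is the
left-normed (graded) bracketing map and `B(a⊗b) = a⊗b − (−1)^{pq} b⊗a` is the graded
bracket of `T(V)`; i.e. the bracket of two elements in the images of `w_p` and `w_q`
lies in the image of `w_{p+q}`.  (Here `p, q ≥ 1` are written `p+1, q+1`.) -/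
theorem stmt16 (k : Type*) [Field k] [CharZero k] (V : Type*) [AddCommGroup V] [Module k V]
    (p q : ℕ)
    (wp wq wpq : TensorAlgebra k V →ₗ[k] TensorAlgebra k V)
    (hwp : ∀ v : Fin (p + 1) → V,
      wp ((List.ofFn fun i => TensorAlgebra.ι k (v i)).prod) = glnbF k V v)
    (hwq : ∀ v : Fin (q + 1) → V,
      wq ((List.ofFn fun i => TensorAlgebra.ι k (v i)).prod) = glnbF k V v)
    (hwpq : ∀ v : Fin (p + q + 1 + 1) → V,
      wpq ((List.ofFn fun i => TensorAlgebra.ι k (v i)).prod) = glnbF k V v) :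
    ∃ ψ : TensorAlgebra k V →ₗ[k] TensorAlgebra k V →ₗ[k] TensorAlgebra k V,
      ∀ a ∈ (LinearMap.range (TensorAlgebra.ι k (M := V)) ^ (p + 1) :
          Submodule k (TensorAlgebra k V)),
        ∀ b ∈ (LinearMap.range (TensorAlgebra.ι k (M := V)) ^ (q + 1) :
            Submodule k (TensorAlgebra k V)),
          wpq (ψ a b) =
            wp a * wq b - ((-1 : k) ^ ((p + 1) * (q + 1))) • (wq b * wp a) := by
  classical
  -- list form of the bracketing hypotheses
  have hwl : ∀ (w : TensorAlgebra k V →ₗ[k] TensorAlgebra k V) (n : ℕ),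
      (∀ v : Fin (n+1) → V,
        w ((List.ofFn fun i => TensorAlgebra.ι k (v i)).prod) = glnbF k V v) →
      ∀ (u₀ : V) (us : List V), us.length = n →
        w (((u₀ :: us).map (TensorAlgebra.ι k)).prod)
          = glnbAux (TensorAlgebra.ι k u₀) 1 (us.map (TensorAlgebra.ι k)) := by
    intro w n hw u₀ us hlen
    subst hlen
    have hv := hw fun i => (u₀ :: us).get i
    have g1 : List.ofFn (fun i : Fin (us.length+1) => (u₀ :: us).get i) = u₀ :: us :=
      List.ofFn_get (u₀ :: us)
    have g2 : List.ofFn (fun i : Fin us.length => (u₀ :: us).get i.succ) = us :=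
      List.ofFn_get us
    have e1 : (List.ofFn fun i : Fin (us.length+1) => TensorAlgebra.ι k ((u₀ :: us).get i))
        = (u₀ :: us).map (TensorAlgebra.ι k) :=
      List.map_ofFn.symm.trans (by rw [g1])
    have e2 : (List.ofFn fun i : Fin us.length => TensorAlgebra.ι k ((u₀ :: us).get i.succ))
        = us.map (TensorAlgebra.ι k) :=
      List.map_ofFn.symm.trans (by rw [g2])
    rw [e1] at hv
    rw [hv]
    simp only [glnbF]
    rw [e2]
    rfl
  -- sign conversion
  have hsign : ∀ z : TensorAlgebra k V,
      ((-1:k)^((p+1)*(q+1))) • z = ((-1:ℤ)^((p+1)*(q+1))) • z := by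
    intro z
    rw [← Int.cast_smul_eq_zsmul k]
    norm_num
  -- the core membership statement
  have key : ∀ a ∈ Submodule.span k (Mon k V p), ∀ b ∈ Submodule.span k (Mon k V q),
      wp a * wq b - ((-1:k)^((p+1)*(q+1))) • (wq b * wp a) ∈ LinearMap.range wpq := by
    intro a ha
    induction ha using Submodule.span_induction with
    | mem a hma =>
        intro b hb
        induction hb using Submodule.span_induction with
        | mem b hmb =>
            obtain ⟨a₀, as, hal, rfl⟩ := hma
            obtain ⟨b₀, bs, hbl, rfl⟩ := hmb
            rw [hwl wp p hwp a₀ as hal, hwl wq q hwq b₀ bs hbl, hsign]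
            have hX := self_mem_Gs (k := k)
              (glnbAux (TensorAlgebra.ι k a₀) 1 (as.map (TensorAlgebra.ι k))) (p+1)
            have hmb' := main_br
              (glnbAux (TensorAlgebra.ι k a₀) 1 (as.map (TensorAlgebra.ι k))) (p+1) b₀ bs 0 _ hX
            simp only [Nat.add_zero, Nat.zero_add, hbl] at hmb'
            refine (Submodule.span_le.2 ?_) hmb'
            rintro y ⟨l, hl, rfl⟩
            rw [show glnbAux (glnbAux (TensorAlgebra.ι k a₀) 1 (as.map (TensorAlgebra.ι k)))
                  (p+1) (l.map (TensorAlgebra.ι k))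
                = glnbAux (TensorAlgebra.ι k a₀) 1 ((as ++ l).map (TensorAlgebra.ι k)) by
              rw [List.map_append, glnbAux_concat, List.length_map, hal, Nat.add_comm 1 p]]
            rw [← hwl wpq (p+q+1) hwpq a₀ (as ++ l)
              (by rw [List.length_append, hal, hl]; omega)]
            exact ⟨_, rfl⟩
        | zero => simp
        | add x y hx hy ihx ihy =>
            rw [show wp a * wq (x+y) - ((-1:k)^((p+1)*(q+1))) • (wq (x+y) * wp a)
                = (wp a * wq x - ((-1:k)^((p+1)*(q+1))) • (wq x * wp a))
                  + (wp a * wq y - ((-1:k)^((p+1)*(q+1))) • (wq y * wp a)) by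
              simp only [map_add, add_mul, mul_add, smul_add]; abel]
            exact Submodule.add_mem _ ihx ihy
        | smul c x hx ihx =>
            rw [show wp a * wq (c • x) - ((-1:k)^((p+1)*(q+1))) • (wq (c • x) * wp a)
                = c • (wp a * wq x - ((-1:k)^((p+1)*(q+1))) • (wq x * wp a)) by
              simp only [map_smul, smul_mul_assoc, mul_smul_comm, smul_sub,
                smul_comm ((-1:k)^((p+1)*(q+1))) c]]
            exact Submodule.smul_mem _ c ihx
    | zero => intro b hb; simp
    | add x y hx hy ihx ihy =>
        intro b hb
        rw [show wp (x+y) * wq b - ((-1:k)^((p+1)*(q+1))) • (wq b * wp (x+y))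
            = (wp x * wq b - ((-1:k)^((p+1)*(q+1))) • (wq b * wp x))
              + (wp y * wq b - ((-1:k)^((p+1)*(q+1))) • (wq b * wp y)) by
          simp only [map_add, add_mul, mul_add, smul_add]; abel]
        exact Submodule.add_mem _ (ihx b hb) (ihy b hb)
    | smul c x hx ihx =>
        intro b hb
        rw [show wp (c • x) * wq b - ((-1:k)^((p+1)*(q+1))) • (wq b * wp (c • x))
            = c • (wp x * wq b - ((-1:k)^((p+1)*(q+1))) • (wq b * wp x)) by
          simp only [map_smul, smul_mul_assoc, mul_smul_comm, smul_sub,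
            smul_comm ((-1:k)^((p+1)*(q+1))) c]]
        exact Submodule.smul_mem _ c (ihx b hb)
  -- projections and a section of wpq
  obtain ⟨P', hPc⟩ := Submodule.exists_isCompl
    ((LinearMap.range (TensorAlgebra.ι k (M := V)))^(p+1))
  obtain ⟨Q', hQc⟩ := Submodule.exists_isCompl
    ((LinearMap.range (TensorAlgebra.ι k (M := V)))^(q+1))
  obtain ⟨R', hRc⟩ := Submodule.exists_isCompl (LinearMap.range wpq)
  obtain ⟨σ, hσ⟩ := LinearMap.exists_rightInverse_of_surjective wpq.rangeRestrict
    (LinearMap.range_rangeRestrict wpq)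
  set P := (LinearMap.range (TensorAlgebra.ι k (M := V)))^(p+1) with hP
  set Q := (LinearMap.range (TensorAlgebra.ι k (M := V)))^(q+1) with hQ
  set prP : TensorAlgebra k V →ₗ[k] TensorAlgebra k V :=
    P.subtype ∘ₗ P.linearProjOfIsCompl P' hPc with hprP
  set prQ : TensorAlgebra k V →ₗ[k] TensorAlgebra k V :=
    Q.subtype ∘ₗ Q.linearProjOfIsCompl Q' hQc with hprQ
  set s' : TensorAlgebra k V →ₗ[k] TensorAlgebra k V :=
    σ ∘ₗ (LinearMap.range wpq).linearProjOfIsCompl R' hRc with hs'def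
  have hs' : ∀ x ∈ LinearMap.range wpq, wpq (s' x) = x := by
    intro x hx
    have h1 : (LinearMap.range wpq).linearProjOfIsCompl R' hRc x = ⟨x, hx⟩ :=
      Submodule.linearProjOfIsCompl_apply_left hRc ⟨x, hx⟩
    have h2 := DFunLike.congr_fun hσ (⟨x, hx⟩ : LinearMap.range wpq)
    simp only [LinearMap.comp_apply, LinearMap.id_apply] at h2
    have h3 := congrArg Subtype.val h2
    simp only [LinearMap.rangeRestrict, LinearMap.codRestrict_apply] at h3
    simp only [hs'def, LinearMap.comp_apply, h1]
    simpa using h3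
  refine ⟨LinearMap.mk₂ k
    (fun a b => s' (wp (prP a) * wq (prQ b)
      - ((-1:k)^((p+1)*(q+1))) • (wq (prQ b) * wp (prP a)))) ?_ ?_ ?_ ?_, ?_⟩
  · intro a a' b
    rw [show wp (prP (a + a')) * wq (prQ b)
          - ((-1:k)^((p+1)*(q+1))) • (wq (prQ b) * wp (prP (a + a')))
        = (wp (prP a) * wq (prQ b) - ((-1:k)^((p+1)*(q+1))) • (wq (prQ b) * wp (prP a)))
          + (wp (prP a') * wq (prQ b)
            - ((-1:k)^((p+1)*(q+1))) • (wq (prQ b) * wp (prP a'))) by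
      simp only [map_add, add_mul, mul_add, smul_add]; abel]
    rw [map_add]
  · intro c a b
    rw [show wp (prP (c • a)) * wq (prQ b)
          - ((-1:k)^((p+1)*(q+1))) • (wq (prQ b) * wp (prP (c • a)))
        = c • (wp (prP a) * wq (prQ b)
          - ((-1:k)^((p+1)*(q+1))) • (wq (prQ b) * wp (prP a))) by
      simp only [map_smul, smul_mul_assoc, mul_smul_comm, smul_sub,
        smul_comm ((-1:k)^((p+1)*(q+1))) c]]
    rw [map_smul]
  · intro a b b'
    rw [show wp (prP a) * wq (prQ (b + b'))
          - ((-1:k)^((p+1)*(q+1))) • (wq (prQ (b + b')) * wp (prP a))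
        = (wp (prP a) * wq (prQ b) - ((-1:k)^((p+1)*(q+1))) • (wq (prQ b) * wp (prP a)))
          + (wp (prP a) * wq (prQ b')
            - ((-1:k)^((p+1)*(q+1))) • (wq (prQ b') * wp (prP a))) by
      simp only [map_add, add_mul, mul_add, smul_add]; abel]
    rw [map_add]
  · intro c a b
    rw [show wp (prP a) * wq (prQ (c • b))
          - ((-1:k)^((p+1)*(q+1))) • (wq (prQ (c • b)) * wp (prP a))
        = c • (wp (prP a) * wq (prQ b)
          - ((-1:k)^((p+1)*(q+1))) • (wq (prQ b) * wp (prP a))) by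
      simp only [map_smul, smul_mul_assoc, mul_smul_comm, smul_sub,
        smul_comm ((-1:k)^((p+1)*(q+1))) c]]
    rw [map_smul]
  · intro a ha b hb
    have hpa : prP a = a := by
      simp only [hprP, LinearMap.comp_apply]
      rw [show P.linearProjOfIsCompl P' hPc a = ⟨a, ha⟩ from
        Submodule.linearProjOfIsCompl_apply_left hPc ⟨a, ha⟩]
      rfl
    have hpb : prQ b = b := by
      simp only [hprQ, LinearMap.comp_apply]
      rw [show Q.linearProjOfIsCompl Q' hQc b = ⟨b, hb⟩ from
        Submodule.linearProjOfIsCompl_apply_left hQc ⟨b, hb⟩]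
      rfl
    simp only [LinearMap.mk₂_apply, hpa, hpb]
    exact hs' _ (key a (pow_le_span_mon p ha) b (pow_le_span_mon q hb))
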